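/- For subgroups H, G ≤ Γ × Ŝ¹ write H ≺ G if H is conjugate in Γ × Ŝ¹ to a subgroup of G. Let n ≥ 3, and let k, k′ ≥ 1, ℓ coprime to k and ℓ′ coprime to k′. Then: (1) C(n,k/ℓ) ≺ D(n,k/ℓ); (2) C(n,k/ℓ) ≺ C(n,k′/ℓ′) if and only if k ∣ k′ and ℓ ≡ ±ℓ′ (mod k); (3) D(n,k/ℓ) ≺ D(n,k′/ℓ′) if and only if k ∣ k′ and ℓ ≡ ±ℓ′ (mod k); (4) for n odd, C'(n,2) ≺ D'(n,2) and D'(n,1) ≺ D'(n,2); (5) for n odd, C(n,1) ≺ C'(n,2) and C(n,1) ≺ D'(n,1). -/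

import Mathlib

noncomputable section

open Complex

/-- The time circle `𝕋 = ℝ/ℤ`. -/
abbrev TimeCircle : Type := AddCircle (1 : ℝ)

/-- The group `Ŝ¹` of rotations and reflections of the time circle: the element
`⟨θ, false⟩` is the rotation `t ↦ θ + t` and `⟨θ, true⟩` is the reflection `t ↦ θ - t`. -/
@[ext] structure TimeSym : Type where
  shift : TimeCircle
  rev : Bool

namespace TimeSym

/-- The action of an element of `Ŝ¹` on the time circle. -/
def act (g : TimeSym) (t : TimeCircle) : TimeCircle :=
  g.shift + (if g.rev then -t else t)

instance : One TimeSym := ⟨⟨0, false⟩⟩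
instance : Mul TimeSym :=
  ⟨fun g h => ⟨g.shift + (if g.rev then -h.shift else h.shift), xor g.rev h.rev⟩⟩
instance : Inv TimeSym := ⟨fun g => ⟨if g.rev then g.shift else -g.shift, g.rev⟩⟩

@[simp] lemma one_shift : (1 : TimeSym).shift = 0 := rfl
@[simp] lemma one_rev : (1 : TimeSym).rev = false := rfl
@[simp] lemma mul_shift (g h : TimeSym) :
    (g * h).shift = g.shift + (if g.rev then -h.shift else h.shift) := rfl
@[simp] lemma mul_rev (g h : TimeSym) : (g * h).rev = xor g.rev h.rev := rfl
@[simp] lemma inv_shift (g : TimeSym) :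
    g⁻¹.shift = if g.rev then g.shift else -g.shift := rfl
@[simp] lemma inv_rev (g : TimeSym) : g⁻¹.rev = g.rev := rfl

instance : Group TimeSym where
  mul_assoc a b c := by
    obtain ⟨sa, ra⟩ := a; obtain ⟨sb, rb⟩ := b; obtain ⟨sc, rc⟩ := c
    ext
    · simp only [mul_shift, mul_rev]
      cases ra <;> cases rb <;> simp <;> abel
    · simp [Bool.xor_assoc]
  one_mul a := by ext <;> simp
  mul_one a := by obtain ⟨sa, ra⟩ := a; ext <;> cases ra <;> simp
  inv_mul_cancel a := by obtain ⟨sa, ra⟩ := a; ext <;> cases ra <;> simp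

@[simp] lemma act_one (t : TimeCircle) : (1 : TimeSym).act t = t := by simp [act]

@[simp] lemma act_mul (g h : TimeSym) (t : TimeCircle) :
    (g * h).act t = g.act (h.act t) := by
  obtain ⟨sg, rg⟩ := g; obtain ⟨sh, rh⟩ := h
  simp only [act, mul_shift, mul_rev]
  cases rg <;> cases rh <;> simp <;> abel

/-- The rotation `t ↦ θ + t` of the time circle, as an element of `Ŝ¹`. -/
def trot (θ : ℝ) : TimeSym := ⟨(θ : TimeCircle), false⟩

/-- The reflection `t ↦ θ - t` of the time circle, as an element of `Ŝ¹`. -/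
def tref (θ : ℝ) : TimeSym := ⟨(θ : TimeCircle), true⟩

end TimeSym

/-- The orthogonal group `O(2)`, realised as the group of `ℝ`-linear isometries of `ℂ`. -/
abbrev O2 : Type := ℂ ≃ₗᵢ[ℝ] ℂ

/-- `A ∈ SO(2)`: `A` is a rotation, i.e. acts as multiplication by a unit complex number. -/
def IsRotO (A : O2) : Prop := ∀ z : ℂ, A z = A 1 * z

/-- Rotation of the plane through the angle `2πa`, as an element of `O(2)`. -/
def rotO (a : ℝ) : O2 := rotation (Circle.exp (2 * Real.pi * a))

/-- The full symmetry group `Γ × Ŝ¹ = O(2) × Sₙ × Ŝ¹` acting on loops in configuration space. -/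
abbrev FullG (n : ℕ) : Type := (O2 × Equiv.Perm (Fin n)) × TimeSym

/-- The element `g = (A, σ, τ)` of `Γ × Ŝ¹` fixes the loop `u` in configuration space. -/
def Fixes {n : ℕ} (g : FullG n) (u : TimeCircle → Fin n → ℂ) : Prop :=
  ∀ (t : TimeCircle) (j : Fin n), u (g.2.act t) j = g.1.1 (u t (g.1.2⁻¹ j))

/-- The symmetry group of a loop `u`: its stabilizer in `Γ × Ŝ¹`. -/
def symmGroup (n : ℕ) (u : TimeCircle → Fin n → ℂ) : Subgroup (FullG n) where
  carrier := {g | Fixes g u}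
  one_mem' := by
    intro t j
    simp [Fixes]
  mul_mem' := by
    intro a b ha hb t j
    have h1 := ha (b.2.act t) j
    have h2 := hb t (a.1.2⁻¹ j)
    simp only [Fixes] at *
    simp only [Prod.fst_mul, Prod.snd_mul, TimeSym.act_mul]
    rw [h1, h2]
    simp [mul_inv_rev]
  inv_mem' := by
    intro a ha
    have key : ∀ (t : TimeCircle) (j : Fin n),
        a.1.1⁻¹ (u t (a.1.2 j)) = u (a.2⁻¹.act t) j := by
      intro t j
      have h := ha (a.2⁻¹.act t) (a.1.2 j)
      rw [← TimeSym.act_mul, mul_inv_cancel, TimeSym.act_one] at h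
      rw [Equiv.Perm.coe_inv, Equiv.symm_apply_apply] at h
      rw [h, LinearIsometryEquiv.coe_inv, LinearIsometryEquiv.symm_apply_apply]
    intro t j
    show u ((a⁻¹).2.act t) j = (a⁻¹).1.1 (u t ((a⁻¹).1.2⁻¹ j))
    simp only [Prod.fst_inv, Prod.snd_inv, inv_inv]
    exact (key t j).symm

variable {n : ℕ}

/-- The basic cyclic permutation `σ₁ : j ↦ j + 1`. -/
def sigma1 (n : ℕ) [NeZero n] : Equiv.Perm (Fin n) := Equiv.addLeft 1

/-- The permutation `s₁ : j ↦ -j` (in `1`-indexed notation, `j ↦ 2 - j`). -/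
def sOne (n : ℕ) [NeZero n] : Equiv.Perm (Fin n) := Equiv.neg (Fin n)

/-- The choreography element `𝔠 = (I, σ₁, -1/n)`. -/
def chorEl (n : ℕ) [NeZero n] : FullG n := ((1, sigma1 n), TimeSym.trot (-(1 / n)))

/-- Projection `ρ : Γ × Ŝ¹ → O(2)`. -/
def rhoHom (n : ℕ) : FullG n →* O2 :=
  (MonoidHom.fst _ _).comp (MonoidHom.fst _ _)

/-- Projection `σ : Γ × Ŝ¹ → Sₙ`. -/
def sigHom (n : ℕ) : FullG n →* Equiv.Perm (Fin n) :=
  (MonoidHom.snd _ _).comp (MonoidHom.fst _ _)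

/-- Projection `τ : Γ × Ŝ¹ → Ŝ¹`. -/
def tauHom (n : ℕ) : FullG n →* TimeSym := MonoidHom.snd _ _


/-- The element `(κ, s₁, 0̄)`: reflection of the plane, the involution `s₁`, time reversal. -/
def reflEl (n : ℕ) [NeZero n] : FullG n := ((Complex.conjLIE, sOne n), TimeSym.tref 0)

/-- The generator `g₀ = (R_{2πℓ/k}, e, 1/k)` of the extra symmetry of `C(n,k/ℓ)`. -/
def g0El (n k ℓ : ℕ) : FullG n := ((rotO ((ℓ : ℝ) / k), 1), TimeSym.trot (1 / k))

/-- The symmetry group `C(n, k/ℓ)`, generated by `𝔠` and `g₀`. -/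
def Cgrp (n : ℕ) [NeZero n] (k ℓ : ℕ) : Subgroup (FullG n) :=
  Subgroup.closure {chorEl n, g0El n k ℓ}

/-- The symmetry group `D(n, k/ℓ)`, generated by `𝔠`, `g₀` and `(κ, s₁, 0̄)`. -/
def Dgrp (n : ℕ) [NeZero n] (k ℓ : ℕ) : Subgroup (FullG n) :=
  Subgroup.closure {chorEl n, g0El n k ℓ, reflEl n}

open Fin.NatCast in
/-- For odd `n`, the unique square root `σ₂` of `σ₁` in `Σₙ`. -/
def sigma2 (n : ℕ) [NeZero n] : Equiv.Perm (Fin n) :=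
  Equiv.addLeft (((n + 1) / 2 : ℕ) : Fin n)

/-- The generator `(κ, σ₂, -1/(2n))` of the exceptional group `C'(n,2)`. -/
def cpEl (n : ℕ) [NeZero n] : FullG n :=
  ((Complex.conjLIE, sigma2 n), TimeSym.trot (-(1 / (2 * n))))

/-- The exceptional symmetry group `C'(n,2)` (for odd `n`), cyclic generated by `(κ, σ₂, -1/(2n))`. -/
def Cpgrp (n : ℕ) [NeZero n] : Subgroup (FullG n) := Subgroup.zpowers (cpEl n)

/-- The element `(R_π, s₁, 0̄)`. -/
def rpiEl (n : ℕ) [NeZero n] : FullG n := ((rotO (1 / 2), sOne n), TimeSym.tref 0)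

/-- The exceptional symmetry group `D'(n,1)` (for odd `n`), generated by `𝔠` and `(R_π, s₁, 0̄)`. -/
def Dp1grp (n : ℕ) [NeZero n] : Subgroup (FullG n) :=
  Subgroup.closure {chorEl n, rpiEl n}

/-- The exceptional symmetry group `D'(n,2)` (for odd `n`), generated by `(κ, σ₂, -1/(2n))`
and `(R_π, s₁, 0̄)`. -/
def Dp2grp (n : ℕ) [NeZero n] : Subgroup (FullG n) :=
  Subgroup.closure {cpEl n, rpiEl n}

/-- The symmetry group `D(n, ∞/ℓ)` of the speed-`ℓ` circular choreography, generated by `𝔠`,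
`(κ, s₁, 0̄)` and all elements `(R_{2πℓθ}, e, θ)` for `θ ∈ S¹`. -/
def circGrp (n : ℕ) [NeZero n] (ℓ : ℕ) : Subgroup (FullG n) :=
  Subgroup.closure
    ({chorEl n, reflEl n} ∪ {g | ∃ θ : ℝ, g = ((rotO ((ℓ : ℝ) * θ), 1), TimeSym.trot θ)})

/-- `H` is conjugate to `K` in `Γ × Ŝ¹`. -/
def IsConjTo {n : ℕ} (H K : Subgroup (FullG n)) : Prop :=
  ∃ γ : FullG n, Subgroup.map (MulAut.conj γ).toMonoidHom H = K

/-- `H ≺ K` : `H` is conjugate in `Γ × Ŝ¹` to a subgroup of `K`. -/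
def SubConjTo {n : ℕ} (H K : Subgroup (FullG n)) : Prop :=
  ∃ γ : FullG n, Subgroup.map (MulAut.conj γ).toMonoidHom H ≤ K

/-!
All groups involved are generated by `𝔠`, a screw element `g₀ = (R_{2πℓ/k}, e, 1/k)` and
possibly the involution `r = (κ, s₁, 0̄)`. Since `𝔠` and `g₀` commute and `r` inverts both,
`C(n,k/ℓ) = {𝔠^a g₀^b}` and `D(n,k/ℓ) = C(n,k/ℓ) ∪ C(n,k/ℓ) r`, where `r` reverses time while
`C(n,k/ℓ)` does not. Conjugation in `Γ × Ŝ¹` changes a screw element `(R_{2πx}, e, y)` only by the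
signs of `x` and `y`. So if `C(n,k/ℓ)` or `D(n,k/ℓ)` is subconjugate to `D(n,k'/ℓ')`, the conjugate
of `g₀` lies in `C(n,k'/ℓ')` with trivial permutation part; as `𝔠` has order `n`, it is a power
`g₀'^b`, and comparing angles and time shifts modulo `1` gives `k ∣ k'` and `ℓ ≡ ±ℓ' (mod k)`.
Conversely `g₀ = g₀'^(k'/k)` when `ℓ ≡ ℓ'`; when `ℓ ≡ -ℓ'` the same holds after conjugating by
`(I, s₁, 0̄)`, which inverts `𝔠`, reverses the time shift of `g₀` and fixes `r`. For odd `n`, the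
square of `(κ, σ₂, -1/(2n))` is `𝔠`, which gives the inclusions among the exceptional groups.
-/

lemma zpow_eq_of_map_add {G : Type*} [Group G] {f : ℝ → G}
    (hf : ∀ x y, f (x + y) = f x * f y) (x : ℝ) (a : ℤ) : f x ^ a = f (a * x) := by
  let φ : Multiplicative ℝ →* G :=
    MonoidHom.mk' (fun t => f t.toAdd) fun s t => hf s.toAdd t.toAdd
  simpa [φ, zsmul_eq_mul] using (map_zpow φ (.ofAdd x) a).symm

lemma dvd_and_modEq_of_sub_eq_intCast {k k' ℓ ℓ' : ℕ} (hk : k ≠ 0) (hk' : k' ≠ 0)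
    {δ ε b m₁ m₂ : ℤ} (hε : ε = 1 ∨ ε = -1)
    (h₁ : δ * (ℓ / k : ℝ) - b * (ℓ' / k' : ℝ) = m₁)
    (h₂ : ε * (1 / k : ℝ) - b * (1 / k' : ℝ) = m₂) :
    k ∣ k' ∧ δ * ℓ ≡ ε * ℓ' [ZMOD k] := by
  have hkR : (k : ℝ) ≠ 0 := by exact_mod_cast hk
  have hk'R : (k' : ℝ) ≠ 0 := by exact_mod_cast hk'
  have e₁ : (ε * ℓ' - δ * ℓ : ℤ) = k * (m₂ * ℓ' - m₁) := by
    have : (ε * ℓ' - δ * ℓ : ℝ) = k * (m₂ * ℓ' - m₁) := by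
      rw [← h₁, ← h₂]
      field_simp
      ring
    exact_mod_cast this
  have e₂ : (ε * k' : ℤ) = k * (b + m₂ * k') := by
    have : (ε * k' : ℝ) = k * (b + m₂ * k') := by
      rw [← h₂]
      field_simp
      ring
    exact_mod_cast this
  refine ⟨Int.natCast_dvd_natCast.1 ?_, Int.modEq_iff_dvd.2 ⟨_, e₁⟩⟩
  rcases hε with rfl | rfl
  · exact ⟨b + m₂ * k', by linarith⟩
  · exact ⟨-(b + m₂ * k'), by linarith⟩

lemma modEq_or_modEq_neg_of_signs {k a b δ ε : ℤ} (hδ : δ = 1 ∨ δ = -1) (hε : ε = 1 ∨ ε = -1)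
    (h : δ * a ≡ ε * b [ZMOD k]) : a ≡ b [ZMOD k] ∨ a ≡ -b [ZMOD k] := by
  rcases hδ with rfl | rfl <;> rcases hε with rfl | rfl <;> simp only [one_mul, neg_one_mul] at h
  · exact .inl h
  · exact .inr h
  · exact .inr (by simpa using h.neg)
  · exact .inl (by simpa using h.neg)

section GroupTheory

open Subgroup

variable {G : Type*} [Group G]

lemma exists_zpow_mul_zpow_of_mem_closure_pair {c g x : G} (hcg : Commute c g)
    (hx : x ∈ closure {c, g}) : ∃ a b : ℤ, c ^ a * g ^ b = x := by
  have hle : zpowers c ≤ normalizer (zpowers g : Set G) := by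
    refine le_trans ?_ (centralizer_le_normalizer _)
    rw [zpowers_le, mem_centralizer_iff]
    rintro _ ⟨b, rfl⟩
    exact (hcg.zpow_right b).eq.symm
  rw [Set.insert_eq, Subgroup.closure_union, ← zpowers_eq_closure, ← zpowers_eq_closure,
    ← SetLike.mem_coe, coe_mul_of_left_le_normalizer_right _ _ hle] at hx
  obtain ⟨_, ⟨a, rfl⟩, _, ⟨b, rfl⟩, rfl⟩ := hx
  exact ⟨a, b, rfl⟩

lemma mem_normalizer_closure_of_conj_eq_inv {s : Set G} {r : G}
    (h : ∀ x ∈ s, r * x * r⁻¹ = x⁻¹) : r ∈ normalizer (closure s : Set G) := by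
  rw [mem_normalizer_iff_map_conj_eq, MonoidHom.map_closure, ← closure_inv s]
  congr 1
  rw [← Set.image_inv_eq_inv]
  exact Set.image_congr fun x hx => by simpa using h x hx

lemma mem_or_mul_mem_of_mem_sup_zpowers {H : Subgroup G} {r : G}
    (hr : r ∈ normalizer (H : Set G)) (hrr : r * r = 1) {x : G} (hx : x ∈ H ⊔ zpowers r) :
    x ∈ H ∨ x * r ∈ H := by
  rw [← SetLike.mem_coe, coe_mul_of_right_le_normalizer_left H _ (zpowers_le.2 hr)] at hx
  obtain ⟨h, hh, _, ⟨m, rfl⟩, rfl⟩ := hx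
  rcases Int.even_or_odd' m with ⟨j, rfl | rfl⟩
  · left
    simpa [zpow_mul, pow_two, hrr] using hh
  · right
    simpa [zpow_add, zpow_mul, pow_two, hrr, mul_assoc] using hh

end GroupTheory

namespace TimeSym

lemma trot_add (x y : ℝ) : trot (x + y) = trot x * trot y := by
  ext <;> simp [trot]

lemma trot_eq_trot_iff {x y : ℝ} : trot x = trot y ↔ ∃ m : ℤ, x - y = m := by
  rw [trot, trot, TimeSym.mk.injEq, and_iff_left rfl, ← sub_eq_zero, ← AddCircle.coe_sub,
    AddCircle.coe_eq_zero_iff]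
  simp [eq_comm]

lemma conj_trot (s : TimeSym) (x : ℝ) : s * trot x * s⁻¹ = trot (if s.rev then -x else x) := by
  obtain ⟨σ, r⟩ := s
  cases r <;> ext <;> simp [trot]

lemma trot_zero : trot 0 = 1 := by
  ext <;> simp [trot]

lemma trot_neg (x : ℝ) : trot (-x) = (trot x)⁻¹ :=
  eq_inv_of_mul_eq_one_left (by rw [← trot_add, neg_add_cancel, trot_zero])

@[simp] lemma tref_rev (x : ℝ) : (tref x).rev = true := rfl

lemma tref_zero_mul_self : tref 0 * tref 0 = 1 := by
  ext <;> simp [tref]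

end TimeSym

lemma rotO_add (x y : ℝ) : rotO (x + y) = rotO x * rotO y := by
  rw [rotO, rotO, rotO, ← map_mul, ← Circle.exp_add, mul_add]

lemma rotO_eq_rotO_iff {x y : ℝ} : rotO x = rotO y ↔ ∃ m : ℤ, x - y = m := by
  rw [rotO, rotO, rotation_injective.eq_iff, Circle.exp_eq_exp]
  refine exists_congr fun m => ?_
  constructor <;> intro h
  · nlinarith [Real.pi_pos]
  · linear_combination 2 * Real.pi * h

lemma rotO_neg (x : ℝ) : rotO (-x) = (rotO x)⁻¹ :=
  eq_inv_of_mul_eq_one_left <| by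
    rw [← rotO_add, neg_add_cancel, rotO, mul_zero, Circle.exp_zero, map_one]

lemma conjLIE_mul_self : (conjLIE : O2) * conjLIE = 1 :=
  LinearIsometryEquiv.ext fun z => by simp

lemma conjLIE_conj_rotO (θ : ℝ) : conjLIE * rotO θ * conjLIE⁻¹ = rotO (-θ) := by
  rw [inv_eq_of_mul_eq_one_right conjLIE_mul_self]
  refine LinearIsometryEquiv.ext fun z => ?_
  simp only [LinearIsometryEquiv.coe_mul, Function.comp_apply, conjLIE_apply, rotO,
    rotation_apply, map_mul, conj_conj, ← Circle.coe_inv_eq_conj, ← Circle.exp_neg, mul_neg]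

lemma rotation_conj_rotO (a : Circle) (θ : ℝ) :
    rotation a * rotO θ * (rotation a)⁻¹ = rotO θ := by
  rw [rotO, ← map_inv, ← map_mul, ← map_mul, mul_inv_cancel_comm]

lemma conj_rotO (A : O2) (θ : ℝ) :
    A * rotO θ * A⁻¹ = rotO θ ∨ A * rotO θ * A⁻¹ = rotO (-θ) := by
  obtain ⟨a, rfl | rfl⟩ := linear_isometry_complex A
  · exact .inl (rotation_conj_rotO a θ)
  · right
    calc conjLIE.trans (rotation a) * rotO θ * (conjLIE.trans (rotation a))⁻¹
        = rotation a * (conjLIE * rotO θ * conjLIE⁻¹) * (rotation a)⁻¹ := by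
          rw [show conjLIE.trans (rotation a) = rotation a * conjLIE from rfl]; group
      _ = rotO (-θ) := by rw [conjLIE_conj_rotO, rotation_conj_rotO]

section Elements

variable {n : ℕ}

lemma fullG_conj_mk (A B : O2) (π σ : Equiv.Perm (Fin n)) (s t : TimeSym) :
    (((A, π), s) : FullG n) * ((B, σ), t) * ((A, π), s)⁻¹ =
      ((A * B * A⁻¹, π * σ * π⁻¹), s * t * s⁻¹) :=
  rfl

def screwEl (n : ℕ) (x y : ℝ) : FullG n := ((rotO x, 1), TimeSym.trot y)

lemma g0El_eq_screwEl (k ℓ : ℕ) : g0El n k ℓ = screwEl n (ℓ / k) (1 / k) := rfl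

lemma screwEl_zpow (x y : ℝ) (b : ℤ) : screwEl n x y ^ b = screwEl n (b * x) (b * y) := by
  simpa using zpow_eq_of_map_add (f := fun t => screwEl n (t * x) (t * y))
    (fun s t => by simp [screwEl, add_mul, rotO_add, TimeSym.trot_add]) 1 b

lemma screwEl_eq_screwEl_iff {x y x' y' : ℝ} :
    screwEl n x y = screwEl n x' y' ↔ (∃ m : ℤ, x - x' = m) ∧ ∃ m : ℤ, y - y' = m := by
  simp [screwEl, Prod.ext_iff, rotO_eq_rotO_iff, TimeSym.trot_eq_trot_iff]

lemma g0El_one_one : g0El n 1 1 = 1 := by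
  rw [g0El_eq_screwEl, show (1 : FullG n) = screwEl n 0 0 by
    rw [screwEl, TimeSym.trot_zero, rotO, mul_zero, Circle.exp_zero, map_one]; rfl]
  exact screwEl_eq_screwEl_iff.2 ⟨⟨1, by simp⟩, ⟨1, by simp⟩⟩

lemma exists_signs_conj_screwEl (γ : FullG n) (x y : ℝ) :
    ∃ δ ε : ℤ, (δ = 1 ∨ δ = -1) ∧ (ε = 1 ∨ ε = -1) ∧
      γ * screwEl n x y * γ⁻¹ = screwEl n (δ * x) (ε * y) := by
  obtain ⟨⟨A, π⟩, s⟩ := γ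
  obtain ⟨δ, hδ, hA⟩ : ∃ δ : ℤ, (δ = 1 ∨ δ = -1) ∧ A * rotO x * A⁻¹ = rotO (δ * x) := by
    rcases conj_rotO A x with h | h
    · exact ⟨1, .inl rfl, by simpa using h⟩
    · exact ⟨-1, .inr rfl, by simpa using h⟩
  obtain ⟨ε, hε, hs⟩ :
      ∃ ε : ℤ, (ε = 1 ∨ ε = -1) ∧ s * TimeSym.trot y * s⁻¹ = TimeSym.trot (ε * y) := by
    rw [TimeSym.conj_trot]
    cases s.rev
    · exact ⟨1, .inl rfl, by simp⟩
    · exact ⟨-1, .inr rfl, by simp⟩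
  refine ⟨δ, ε, hδ, hε, ?_⟩
  rw [screwEl, fullG_conj_mk, hA, hs, mul_one, mul_inv_cancel]
  rfl

lemma g0El_zpow_eq_screwEl {k q ℓ ℓ' : ℕ} (hk : k ≠ 0) (hq : q ≠ 0) {ε : ℤ}
    (h : (ℓ : ℤ) ≡ ε * ℓ' [ZMOD k]) :
    g0El n (k * q) ℓ' ^ (ε * q) = screwEl n (ℓ / k) (ε / k) := by
  obtain ⟨t, ht⟩ := Int.modEq_iff_dvd.1 h
  have htR : (ε * ℓ' - ℓ : ℝ) = k * t := by exact_mod_cast ht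
  have hkR : (k : ℝ) ≠ 0 := by exact_mod_cast hk
  have hqR : (q : ℝ) ≠ 0 := by exact_mod_cast hq
  rw [g0El_eq_screwEl, screwEl_zpow, screwEl_eq_screwEl_iff]
  refine ⟨⟨t, ?_⟩, ⟨0, ?_⟩⟩
  · push_cast
    field_simp
    linear_combination htR
  · push_cast
    field_simp
    ring

variable [NeZero n]

open Fin.CommRing in
lemma sigma1_zpow_eq_one_iff {a : ℤ} : sigma1 n ^ a = 1 ↔ (n : ℤ) ∣ a := by
  rw [sigma1, Equiv.zsmul_addLeft, zsmul_one, ← CharP.intCast_eq_zero_iff (Fin n) n a]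
  refine ⟨fun h => by simpa using congrArg (· 0) h, fun h => by rw [h, Equiv.addLeft_zero]⟩

open Fin.CommRing in
lemma sigma2_mul_self (hodd : Odd n) : sigma2 n * sigma2 n = sigma1 n := by
  rw [sigma2, sigma1, ← Equiv.addLeft_add, ← Nat.cast_add,
    show (n + 1) / 2 + (n + 1) / 2 = n + 1 by obtain ⟨m, rfl⟩ := hodd; omega]
  simp

lemma sOne_mul_self : sOne n * sOne n = 1 := by
  ext j
  simp [sOne]

lemma sOne_conj_sigma1 : sOne n * sigma1 n * (sOne n)⁻¹ = (sigma1 n)⁻¹ := by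
  rw [inv_eq_of_mul_eq_one_right sOne_mul_self]
  ext j
  simp [sOne, sigma1, add_comm]

lemma chorEl_zpow_eq_one {a : ℤ} (h : sigma1 n ^ a = 1) : chorEl n ^ a = 1 := by
  obtain ⟨j, rfl⟩ := sigma1_zpow_eq_one_iff.1 h
  have htime : TimeSym.trot (-(1 / n)) ^ ((n : ℤ) * j) = 1 := by
    rw [zpow_eq_of_map_add TimeSym.trot_add, ← TimeSym.trot_zero, TimeSym.trot_eq_trot_iff]
    have hn : (n : ℝ) ≠ 0 := Nat.cast_ne_zero.2 (NeZero.ne n)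
    exact ⟨-j, by push_cast; field_simp; ring⟩
  exact Prod.ext (Prod.ext (one_zpow _) h) htime

lemma commute_chorEl_g0El (k ℓ : ℕ) : Commute (chorEl n) (g0El n k ℓ) := by
  simp only [Commute, SemiconjBy, chorEl, g0El, Prod.mk_mul_mk, one_mul, mul_one,
    ← TimeSym.trot_add, add_comm]

lemma cpEl_mul_self (hodd : Odd n) : cpEl n * cpEl n = chorEl n := by
  rw [cpEl, chorEl, Prod.mk_mul_mk, Prod.mk_mul_mk, conjLIE_mul_self, sigma2_mul_self hodd,
    ← TimeSym.trot_add]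
  congr 2
  field_simp
  ring

end Elements

section SubConj

open Subgroup

variable {n : ℕ}

lemma subConjTo_of_le {H K : Subgroup (FullG n)} (h : H ≤ K) : SubConjTo H K :=
  ⟨1, by rintro _ ⟨x, hx, rfl⟩; simpa using h hx⟩

lemma subConjTo_closure_iff {S : Set (FullG n)} {K : Subgroup (FullG n)} :
    SubConjTo (closure S) K ↔ ∃ γ : FullG n, ∀ x ∈ S, γ * x * γ⁻¹ ∈ K := by
  simp only [SubConjTo, MonoidHom.map_closure, closure_le, Set.image_subset_iff]
  rfl

end SubConj

section Subgroups

open Subgroup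

variable {n : ℕ} [NeZero n]

def flipEl (n : ℕ) [NeZero n] : FullG n := ((1, sOne n), TimeSym.tref 0)

lemma reflEl_mul_self : reflEl n * reflEl n = 1 := by
  rw [reflEl, Prod.mk_mul_mk, Prod.mk_mul_mk, conjLIE_mul_self, sOne_mul_self,
    TimeSym.tref_zero_mul_self]
  rfl

lemma reflEl_conj_chorEl : reflEl n * chorEl n * (reflEl n)⁻¹ = (chorEl n)⁻¹ := by
  rw [reflEl, chorEl, fullG_conj_mk, TimeSym.conj_trot, TimeSym.tref_rev, if_pos rfl,
    TimeSym.trot_neg, sOne_conj_sigma1, mul_one, mul_inv_cancel]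
  rfl

lemma reflEl_conj_screwEl (x y : ℝ) :
    reflEl n * screwEl n x y * (reflEl n)⁻¹ = (screwEl n x y)⁻¹ := by
  simp [reflEl, screwEl, conjLIE_conj_rotO, rotO_neg, TimeSym.conj_trot,
    TimeSym.tref, TimeSym.trot_neg]

lemma flipEl_conj_chorEl : flipEl n * chorEl n * (flipEl n)⁻¹ = (chorEl n)⁻¹ := by
  rw [flipEl, chorEl, fullG_conj_mk, TimeSym.conj_trot, TimeSym.tref_rev, if_pos rfl,
    TimeSym.trot_neg, sOne_conj_sigma1, mul_one, mul_inv_cancel]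
  rfl

lemma flipEl_conj_screwEl (x y : ℝ) :
    flipEl n * screwEl n x y * (flipEl n)⁻¹ = screwEl n x (-y) := by
  simp [flipEl, screwEl, TimeSym.conj_trot, TimeSym.tref]

lemma flipEl_conj_reflEl : flipEl n * reflEl n * (flipEl n)⁻¹ = reflEl n := by
  simp [flipEl, reflEl]

def timeRotSubgroup (n : ℕ) : Subgroup (FullG n) where
  carrier := {g | g.2.rev = false}
  one_mem' := rfl
  mul_mem' := by simp_all
  inv_mem' := by simp_all

variable {k ℓ : ℕ}

lemma chorEl_mem_Cgrp : chorEl n ∈ Cgrp n k ℓ := subset_closure (by simp)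

lemma g0El_mem_Cgrp : g0El n k ℓ ∈ Cgrp n k ℓ := subset_closure (by simp)

lemma reflEl_mem_Dgrp : reflEl n ∈ Dgrp n k ℓ := subset_closure (by simp)

lemma Cgrp_le_timeRotSubgroup : Cgrp n k ℓ ≤ timeRotSubgroup n := by
  rw [Cgrp, closure_le]
  rintro _ (rfl | rfl) <;> rfl

lemma Dgrp_eq_sup : Dgrp n k ℓ = Cgrp n k ℓ ⊔ zpowers (reflEl n) := by
  rw [Dgrp, Cgrp, zpowers_eq_closure, ← Subgroup.closure_union, Set.insert_union,
    Set.singleton_union]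

lemma Cgrp_le_Dgrp : Cgrp n k ℓ ≤ Dgrp n k ℓ := by
  rw [Dgrp_eq_sup]
  exact le_sup_left

lemma reflEl_mem_normalizer_Cgrp : reflEl n ∈ normalizer (Cgrp n k ℓ : Set (FullG n)) := by
  refine mem_normalizer_closure_of_conj_eq_inv ?_
  rintro _ (rfl | rfl)
  exacts [reflEl_conj_chorEl, reflEl_conj_screwEl _ _]

lemma mem_Cgrp_of_mem_Dgrp {x : FullG n} (hx : x ∈ Dgrp n k ℓ) (hrev : x.2.rev = false) :
    x ∈ Cgrp n k ℓ := by
  rw [Dgrp_eq_sup] at hx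
  refine (mem_or_mul_mem_of_mem_sup_zpowers reflEl_mem_normalizer_Cgrp reflEl_mul_self hx
    ).resolve_right fun h => ?_
  have := Cgrp_le_timeRotSubgroup h
  simp [timeRotSubgroup, hrev, reflEl, TimeSym.tref] at this

end Subgroups

section Criteria

open Subgroup

variable {n : ℕ} [NeZero n]

lemma exists_conj_generators_mem_Cgrp {k k' ℓ ℓ' : ℕ} (hk : k ≠ 0) (hk' : k' ≠ 0) (hdvd : k ∣ k')
    (hmod : (ℓ : ℤ) ≡ ℓ' [ZMOD k] ∨ (ℓ : ℤ) ≡ -ℓ' [ZMOD k]) :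
    ∃ γ : FullG n, γ * chorEl n * γ⁻¹ ∈ Cgrp n k' ℓ' ∧ γ * g0El n k ℓ * γ⁻¹ ∈ Cgrp n k' ℓ' ∧
      γ * reflEl n * γ⁻¹ = reflEl n := by
  obtain ⟨q, rfl⟩ := hdvd
  have hq : q ≠ 0 := right_ne_zero_of_mul hk'
  rcases hmod with hmod | hmod
  · have hg := g0El_zpow_eq_screwEl (n := n) hk hq (ε := 1) (by simpa using hmod)
    rw [Int.cast_one, ← g0El_eq_screwEl] at hg
    refine ⟨1, by simpa using chorEl_mem_Cgrp, ?_, by simp⟩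
    rw [one_mul, inv_one, mul_one, ← hg]
    exact zpow_mem g0El_mem_Cgrp _
  · have hg := g0El_zpow_eq_screwEl (n := n) hk hq (ε := -1) (by simpa using hmod)
    refine ⟨flipEl n, ?_, ?_, flipEl_conj_reflEl⟩
    · rw [flipEl_conj_chorEl]
      exact inv_mem chorEl_mem_Cgrp
    · rw [g0El_eq_screwEl, flipEl_conj_screwEl, ← neg_div, ← Int.cast_one, ← Int.cast_neg, ← hg]
      exact zpow_mem g0El_mem_Cgrp _

lemma dvd_and_modEq_of_conj_g0El_mem_Cgrp {k k' ℓ ℓ' : ℕ} (hk : k ≠ 0) (hk' : k' ≠ 0)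
    {γ : FullG n} (h : γ * g0El n k ℓ * γ⁻¹ ∈ Cgrp n k' ℓ') :
    k ∣ k' ∧ ((ℓ : ℤ) ≡ ℓ' [ZMOD k] ∨ (ℓ : ℤ) ≡ -ℓ' [ZMOD k]) := by
  obtain ⟨δ, ε, hδ, hε, hconj⟩ := exists_signs_conj_screwEl γ (ℓ / k) (1 / k)
  rw [g0El_eq_screwEl, hconj] at h
  obtain ⟨a, b, hab⟩ := exists_zpow_mul_zpow_of_mem_closure_pair (commute_chorEl_g0El k' ℓ') h
  have hσ : sigma1 n ^ a = 1 := by simpa [chorEl, g0El, screwEl] using congrArg (fun x => x.1.2) hab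
  rw [chorEl_zpow_eq_one hσ, one_mul, g0El_eq_screwEl, screwEl_zpow] at hab
  obtain ⟨⟨m₁, h₁⟩, ⟨m₂, h₂⟩⟩ := screwEl_eq_screwEl_iff.1 hab.symm
  obtain ⟨hdvd, hmod⟩ := dvd_and_modEq_of_sub_eq_intCast hk hk' hε h₁ h₂
  exact ⟨hdvd, modEq_or_modEq_neg_of_signs hδ hε hmod⟩

theorem subConjTo_Cgrp_Cgrp_iff {k k' ℓ ℓ' : ℕ} (hk : k ≠ 0) (hk' : k' ≠ 0) :
    SubConjTo (Cgrp n k ℓ) (Cgrp n k' ℓ') ↔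
      k ∣ k' ∧ ((ℓ : ℤ) ≡ ℓ' [ZMOD k] ∨ (ℓ : ℤ) ≡ -ℓ' [ZMOD k]) := by
  rw [Cgrp.eq_1 n k ℓ, subConjTo_closure_iff]
  constructor
  · rintro ⟨γ, hγ⟩
    exact dvd_and_modEq_of_conj_g0El_mem_Cgrp hk hk' (hγ _ (by simp))
  · rintro ⟨hdvd, hmod⟩
    obtain ⟨γ, hc, hg, -⟩ := exists_conj_generators_mem_Cgrp (n := n) hk hk' hdvd hmod
    exact ⟨γ, by rintro _ (rfl | rfl); exacts [hc, hg]⟩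

theorem subConjTo_Dgrp_Dgrp_iff {k k' ℓ ℓ' : ℕ} (hk : k ≠ 0) (hk' : k' ≠ 0) :
    SubConjTo (Dgrp n k ℓ) (Dgrp n k' ℓ') ↔
      k ∣ k' ∧ ((ℓ : ℤ) ≡ ℓ' [ZMOD k] ∨ (ℓ : ℤ) ≡ -ℓ' [ZMOD k]) := by
  rw [Dgrp.eq_1 n k ℓ, subConjTo_closure_iff]
  constructor
  · rintro ⟨γ, hγ⟩
    refine dvd_and_modEq_of_conj_g0El_mem_Cgrp hk hk' (mem_Cgrp_of_mem_Dgrp (hγ _ (by simp)) ?_)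
    simp [g0El, TimeSym.trot]
  · rintro ⟨hdvd, hmod⟩
    obtain ⟨γ, hc, hg, hr⟩ := exists_conj_generators_mem_Cgrp (n := n) hk hk' hdvd hmod
    refine ⟨γ, ?_⟩
    rintro _ (rfl | rfl | rfl)
    exacts [Cgrp_le_Dgrp hc, Cgrp_le_Dgrp hg, hr.symm ▸ reflEl_mem_Dgrp]

end Criteria

section Exceptional

open Subgroup

variable {n : ℕ} [NeZero n]

lemma cpEl_mem_Dp2grp : cpEl n ∈ Dp2grp n := subset_closure (by simp)

lemma Cpgrp_le_Dp2grp : Cpgrp n ≤ Dp2grp n := zpowers_le.2 cpEl_mem_Dp2grp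

lemma Dp1grp_le_Dp2grp (hodd : Odd n) : Dp1grp n ≤ Dp2grp n := by
  rw [Dp1grp, closure_le]
  rintro _ (rfl | rfl)
  · rw [← cpEl_mul_self hodd]
    exact mul_mem cpEl_mem_Dp2grp cpEl_mem_Dp2grp
  · exact subset_closure (by simp)

lemma Cgrp_one_one_le_Cpgrp (hodd : Odd n) : Cgrp n 1 1 ≤ Cpgrp n := by
  rw [Cgrp, closure_le]
  rintro _ (rfl | rfl)
  · rw [← cpEl_mul_self hodd]
    exact mul_mem (mem_zpowers _) (mem_zpowers _)
  · rw [SetLike.mem_coe, g0El_one_one]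
    exact one_mem _

lemma Cgrp_one_one_le_Dp1grp : Cgrp n 1 1 ≤ Dp1grp n := by
  rw [Cgrp, closure_le]
  rintro _ (rfl | rfl)
  · exact subset_closure (by simp)
  · rw [SetLike.mem_coe, g0El_one_one]
    exact one_mem _

end Exceptional

theorem statement_10_general (n : ℕ) [NeZero n]
    (k k' ℓ ℓ' : ℕ) (hk : 1 ≤ k) (hk' : 1 ≤ k') :
    SubConjTo (Cgrp n k ℓ) (Dgrp n k ℓ) ∧
    (SubConjTo (Cgrp n k ℓ) (Cgrp n k' ℓ') ↔
      k ∣ k' ∧ ((ℓ : ℤ) ≡ (ℓ' : ℤ) [ZMOD (k : ℤ)] ∨ (ℓ : ℤ) ≡ -(ℓ' : ℤ) [ZMOD (k : ℤ)])) ∧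
    (SubConjTo (Dgrp n k ℓ) (Dgrp n k' ℓ') ↔
      k ∣ k' ∧ ((ℓ : ℤ) ≡ (ℓ' : ℤ) [ZMOD (k : ℤ)] ∨ (ℓ : ℤ) ≡ -(ℓ' : ℤ) [ZMOD (k : ℤ)])) ∧
    (Odd n → SubConjTo (Cpgrp n) (Dp2grp n) ∧ SubConjTo (Dp1grp n) (Dp2grp n)) ∧
    (Odd n → SubConjTo (Cgrp n 1 1) (Cpgrp n) ∧ SubConjTo (Cgrp n 1 1) (Dp1grp n)) := by
  have hk0 : k ≠ 0 := Nat.one_le_iff_ne_zero.1 hk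
  have hk'0 : k' ≠ 0 := Nat.one_le_iff_ne_zero.1 hk'
  exact ⟨subConjTo_of_le Cgrp_le_Dgrp, subConjTo_Cgrp_Cgrp_iff hk0 hk'0,
    subConjTo_Dgrp_Dgrp_iff hk0 hk'0,
    fun hodd => ⟨subConjTo_of_le Cpgrp_le_Dp2grp, subConjTo_of_le (Dp1grp_le_Dp2grp hodd)⟩,
    fun hodd => ⟨subConjTo_of_le (Cgrp_one_one_le_Cpgrp hodd),
      subConjTo_of_le Cgrp_one_one_le_Dp1grp⟩⟩

/-- **Isotropy subgroup lattice.** Subconjugacy relations among the symmetry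
groups of planar choreographies. -/
theorem statement_10 (n : ℕ) (hn : 3 ≤ n) [NeZero n]
    (k k' ℓ ℓ' : ℕ) (hk : 1 ≤ k) (hk' : 1 ≤ k')
    (hl : Nat.Coprime ℓ k) (hl' : Nat.Coprime ℓ' k') :
    SubConjTo (Cgrp n k ℓ) (Dgrp n k ℓ) ∧
    (SubConjTo (Cgrp n k ℓ) (Cgrp n k' ℓ') ↔
      k ∣ k' ∧ ((ℓ : ℤ) ≡ (ℓ' : ℤ) [ZMOD (k : ℤ)] ∨ (ℓ : ℤ) ≡ -(ℓ' : ℤ) [ZMOD (k : ℤ)])) ∧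
    (SubConjTo (Dgrp n k ℓ) (Dgrp n k' ℓ') ↔
      k ∣ k' ∧ ((ℓ : ℤ) ≡ (ℓ' : ℤ) [ZMOD (k : ℤ)] ∨ (ℓ : ℤ) ≡ -(ℓ' : ℤ) [ZMOD (k : ℤ)])) ∧
    (Odd n → SubConjTo (Cpgrp n) (Dp2grp n) ∧ SubConjTo (Dp1grp n) (Dp2grp n)) ∧
    (Odd n → SubConjTo (Cgrp n 1 1) (Cpgrp n) ∧ SubConjTo (Cgrp n 1 1) (Dp1grp n)) :=
  statement_10_general n k k' ℓ ℓ' hk hk'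

end
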